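/- arXiv:1312.5799 — 7 statements merged into one kernel-verified Lean document; each statement's English description precedes it below -/
import Mathlib

section
/- The sequence defined by θ₀ = τ/n and θ_{k+1} = (√(θ_k⁴ + 4θ_k²) − θ_k²)/2 satisfies θ_k ≤ 2/(k + 2n/τ) for all k ≥ 0. -/
/-!
The step `x ↦ (√(x⁴ + 4x²) - x²) / 2` sends `x` to the nonnegative root `y` of
`y² = x² (1 - y)`, so it lands below any `c ≥ 0` with `x² (1 - c) ≤ c²`. For `0 ≤ x ≤ 2 / t` and
`c = 2 / (t + 1)` this condition reads `x² (t² - 1) ≤ 4`, which follows from `x² t² ≤ 4`. Since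
`θ₀ = τ / n = 2 / (2n / τ)`, induction on `k` gives `θ_k ≤ 2 / (k + 2n / τ)`.
-/

open Real

noncomputable def thetaStep (x : ℝ) : ℝ := (√(x ^ 4 + 4 * x ^ 2) - x ^ 2) / 2

theorem thetaStep_nonneg (x : ℝ) : 0 ≤ thetaStep x := by
  have : x ^ 2 ≤ √(x ^ 4 + 4 * x ^ 2) :=
    Real.le_sqrt_of_sq_le (by nlinarith [sq_nonneg x])
  unfold thetaStep
  linarith

theorem thetaStep_le_of_sq_mul_one_sub_le {x c : ℝ} (hc : 0 ≤ c)
    (h : x ^ 2 * (1 - c) ≤ c ^ 2) : thetaStep x ≤ c := by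
  have : √(x ^ 4 + 4 * x ^ 2) ≤ 2 * c + x ^ 2 :=
    Real.sqrt_le_iff.mpr ⟨by positivity, by nlinarith⟩
  unfold thetaStep
  linarith

theorem thetaStep_le_two_div_add_one {x t : ℝ} (ht : 0 < t) (hx₀ : 0 ≤ x) (hx : x ≤ 2 / t) :
    thetaStep x ≤ 2 / (t + 1) := by
  have hxt : x * t ≤ 2 := (le_div_iff₀ ht).mp hx
  have hsq : x ^ 2 * t ^ 2 ≤ 4 := by nlinarith [mul_nonneg hx₀ ht.le]
  apply thetaStep_le_of_sq_mul_one_sub_le (by positivity)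
  rw [one_sub_div (by positivity), div_pow, ← mul_div_assoc, div_le_div_iff₀ (by positivity)
    (by positivity)]
  nlinarith [sq_nonneg x]

theorem le_two_div_of_eq_thetaStep {θ : ℕ → ℝ} {t : ℝ} (ht : 0 < t) (h₀ : 0 ≤ θ 0)
    (hθ₀ : θ 0 ≤ 2 / t) (hrec : ∀ k, θ (k + 1) = thetaStep (θ k)) (k : ℕ) :
    0 ≤ θ k ∧ θ k ≤ 2 / (k + t) := by
  induction k with
  | zero => simpa using ⟨h₀, hθ₀⟩
  | succ k ih =>
    rw [hrec, Nat.cast_succ, add_right_comm]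
    exact ⟨thetaStep_nonneg _, thetaStep_le_two_div_add_one (by positivity) ih.1 ih.2⟩

theorem theta_upper_bound_general (n τ : ℝ) (hn : 0 < n) (hτ : 0 < τ)
    (θ : ℕ → ℝ) (h0 : θ 0 = τ / n)
    (hrec : ∀ k, θ (k + 1) = (Real.sqrt ((θ k) ^ 4 + 4 * (θ k) ^ 2) - (θ k) ^ 2) / 2) :
    ∀ k : ℕ, θ k ≤ 2 / ((k : ℝ) + 2 * n / τ) := by
  have hθ₀ : θ 0 = 2 / (2 * n / τ) := by
    rw [h0]
    field_simp
  intro k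
  exact (le_two_div_of_eq_thetaStep (by positivity) (by rw [h0]; positivity) hθ₀.le hrec k).2

theorem theta_upper_bound (n τ : ℝ) (hn : 0 < n) (hτ : 0 < τ) (hτn : τ ≤ n)
    (θ : ℕ → ℝ) (h0 : θ 0 = τ / n)
    (hrec : ∀ k, θ (k + 1) = (Real.sqrt ((θ k) ^ 4 + 4 * (θ k) ^ 2) - (θ k) ^ 2) / 2) :
    ∀ k : ℕ, θ k ≤ 2 / ((k : ℝ) + 2 * n / τ) :=
  theta_upper_bound_general n τ hn hτ θ h0 hrec
end

section
/- If a sequence θ_k in (0,1] satisfies (1 − θ_{k+1})/θ_{k+1}² = 1/θ_k², and sequences x_k, y_k, z_k in a vector space satisfy y_k = (1−θ_k) x_k + θ_k z_k and x_{k+1} = y_k + (n/τ)θ_k (z_{k+1} − z_k) with θ₀ = τ/n and x₀ = z₀, then for every k, x_k is a convex combination of z₀, …, z_k; specifically x_k = Σ_{l=0}^k γ_k^l z_l where γ₀⁰=1, γ₁⁰=0, γ₁¹=1, and for k ≥ 1: γ_{k+1}^l = (1−θ_k)γ_k^l for l ≤ k−1, γ_{k+1}^k = θ_k(1 − (n/τ)θ_{k−1})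 + (n/τ)(θ_{k−1} − θ_k), γ_{k+1}^{k+1} = (n/τ)θ_k, with all γ_k^l ≥ 0 and Σ_{l=0}^k γ_k^l = 1. -/
/-!
Write `c = n / τ`, so that `c θ₀ = 1`. The representation `x_k = ∑ γ_k^l z_l` is pure linear
algebra: inserting it for `x_{k+1}` into the update rule produces exactly the recursion for
`γ_{k+2}`. Applied to the constant sequences `x = z = 1` (which satisfy the update rule) it also
gives `∑ γ_k^l = 1`. Nonnegativity comes from rewriting the identity for `θ` as
`1 - θ_{k+1} = (θ_{k+1} / θ_k)²`: this makes `θ` nonincreasing, so `c θ_k ≤ c θ₀ = 1`, and every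
factor in the recursion for `γ` is nonnegative.
-/

open Finset

section Theta

variable {θ : ℕ → ℝ}

theorem one_sub_succ_eq_sq_div (hθpos : ∀ k, 0 < θ k)
    (hθid : ∀ k, (1 - θ (k + 1)) / θ (k + 1) ^ 2 = 1 / θ k ^ 2) (k : ℕ) :
    1 - θ (k + 1) = (θ (k + 1) / θ k) ^ 2 := by
  have h := hθid k
  have := (hθpos k).ne'
  have := (hθpos (k + 1)).ne'
  field_simp at h ⊢
  linarith

theorem antitone_of_one_sub_succ_div_sq (hθpos : ∀ k, 0 < θ k)
    (hθid : ∀ k, (1 - θ (k + 1)) / θ (k + 1) ^ 2 = 1 / θ k ^ 2) : Antitone θ := by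
  refine antitone_nat_of_succ_le fun k => ?_
  have hsq : θ (k + 1) ^ 2 = (1 - θ (k + 1)) * θ k ^ 2 := by
    rw [one_sub_succ_eq_sq_div hθpos hθid k, div_pow,
      div_mul_cancel₀ _ (pow_ne_zero 2 (hθpos k).ne')]
  nlinarith [hθpos k, hθpos (k + 1)]

end Theta

structure WeightRecursion (θ : ℕ → ℝ) (c : ℝ) (γ : ℕ → ℕ → ℝ) : Prop where
  zero_zero : γ 0 0 = 1
  one_zero : γ 1 0 = 0
  one_one : γ 1 1 = 1
  succ_succ_of_le : ∀ j, ∀ l ≤ j, γ (j + 2) l = (1 - θ (j + 1)) * γ (j + 1) l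
  succ_succ_sub_one : ∀ j, γ (j + 2) (j + 1) = θ (j + 1) * (1 - c * θ j) + c * (θ j - θ (j + 1))
  succ_succ_self : ∀ j, γ (j + 2) (j + 2) = c * θ (j + 1)

namespace WeightRecursion

variable {θ : ℕ → ℝ} {c : ℝ} {γ : ℕ → ℕ → ℝ}

theorem succ_self (hγ : WeightRecursion θ c γ) (hc : c * θ 0 = 1) (j : ℕ) :
    γ (j + 1) (j + 1) = c * θ j := by
  cases j with
  | zero => rw [hγ.one_one, hc]
  | succ j => exact hγ.succ_succ_self j

theorem sum_range_smul_succ_succ {E : Type*} [AddCommGroup E] [Module ℝ E]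
    (hγ : WeightRecursion θ c γ) (v : ℕ → E) (j : ℕ) :
    ∑ l ∈ range (j + 1), γ (j + 2) l • v l
      = (1 - θ (j + 1)) • ∑ l ∈ range (j + 1), γ (j + 1) l • v l := by
  rw [smul_sum]
  refine sum_congr rfl fun l hl => ?_
  rw [hγ.succ_succ_of_le j l (Nat.lt_succ_iff.mp (mem_range.mp hl)), mul_smul]

theorem eq_sum_smul {E : Type*} [AddCommGroup E] [Module ℝ E]
    (hγ : WeightRecursion θ c γ) (hc : c * θ 0 = 1) {x z : ℕ → E} (hx0 : x 0 = z 0)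
    (hx : ∀ k, x (k + 1) = (1 - θ k) • x k + θ k • z k + (c * θ k) • (z (k + 1) - z k)) :
    ∀ k, x k = ∑ l ∈ range (k + 1), γ k l • z l := by
  intro k
  induction k using Nat.twoStepInduction with
  | zero => simp [hγ.zero_zero, hx0]
  | one =>
    rw [hx 0, hx0, hc, sum_range_succ, sum_range_one, hγ.one_zero, hγ.one_one]
    module
  | more j _ ih =>
    rw [sum_range_succ, hγ.succ_self hc j] at ih
    rw [hx (j + 1), ih, sum_range_succ _ (j + 2), sum_range_succ _ (j + 1),
      hγ.sum_range_smul_succ_succ, hγ.succ_succ_sub_one, hγ.succ_succ_self]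
    module

theorem nonneg (hγ : WeightRecursion θ c γ) (hθpos : ∀ k, 0 < θ k)
    (hθid : ∀ k, (1 - θ (k + 1)) / θ (k + 1) ^ 2 = 1 / θ k ^ 2) (hc : c * θ 0 = 1) :
    ∀ k, ∀ l ≤ k, 0 ≤ γ k l := by
  have hθanti := antitone_of_one_sub_succ_div_sq hθpos hθid
  have hc0 : 0 < c := pos_of_mul_pos_left (hc ▸ one_pos) (hθpos 0).le
  have hcθ : ∀ j, c * θ j ≤ 1 := fun j =>
    hc ▸ mul_le_mul_of_nonneg_left (hθanti (Nat.zero_le j)) hc0.le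
  intro k
  induction k using Nat.twoStepInduction with
  | zero => intro l hl; simp [Nat.le_zero.mp hl, hγ.zero_zero]
  | one =>
    intro l hl
    interval_cases l
    · simp [hγ.one_zero]
    · simp [hγ.one_one]
  | more j _ ih =>
    intro l hl
    rcases Nat.lt_or_ge l (j + 1) with hlt | hge
    · rw [hγ.succ_succ_of_le j l (Nat.lt_succ_iff.mp hlt), one_sub_succ_eq_sq_div hθpos hθid]
      exact mul_nonneg (sq_nonneg _) (ih l hlt.le)
    · obtain rfl | rfl : l = j + 1 ∨ l = j + 2 := by omega
      · rw [hγ.succ_succ_sub_one]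
        have := hθanti (Nat.le_succ j)
        nlinarith [hθpos (j + 1), hcθ j]
      · rw [hγ.succ_succ_self]
        exact (mul_pos hc0 (hθpos (j + 1))).le

end WeightRecursion

theorem x_convex_combination_of_z_general (n τ : ℝ)
    (N : ℕ) (θ : ℕ → ℝ) (hθpos : ∀ k, 0 < θ k)
    (hθ0 : θ 0 = τ / n)
    (hθid : ∀ k, (1 - θ (k + 1)) / (θ (k + 1)) ^ 2 = 1 / (θ k) ^ 2)
    (x y z : ℕ → (Fin N → ℝ))
    (hx0 : x 0 = z 0)
    (hy : ∀ k, y k = (1 - θ k) • x k + θ k • z k)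
    (hx : ∀ k, x (k + 1) = y k + ((n / τ) * θ k) • (z (k + 1) - z k))
    (γ : ℕ → ℕ → ℝ)
    (hγ00 : γ 0 0 = 1) (hγ10 : γ 1 0 = 0) (hγ11 : γ 1 1 = 1)
    (hγrec : ∀ j : ℕ, ∀ l ≤ j,
      γ (j + 2) l = (1 - θ (j + 1)) * γ (j + 1) l)
    (hγk : ∀ j : ℕ,
      γ (j + 2) (j + 1) = θ (j + 1) * (1 - (n / τ) * θ j) + (n / τ) * (θ j - θ (j + 1)))
    (hγtop : ∀ j : ℕ, γ (j + 2) (j + 2) = (n / τ) * θ (j + 1)) :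
    ∀ k : ℕ, (∀ l ≤ k, 0 ≤ γ k l) ∧ (∑ l ∈ Finset.range (k + 1), γ k l = 1) ∧
      x k = ∑ l ∈ Finset.range (k + 1), γ k l • z l := by
  have hγ : WeightRecursion θ (n / τ) γ := ⟨hγ00, hγ10, hγ11, hγrec, hγk, hγtop⟩
  have hc : n / τ * θ 0 = 1 := by
    rw [hθ0, ← inv_div]
    exact inv_mul_cancel₀ (hθ0 ▸ (hθpos 0).ne')
  have hx' : ∀ k, x (k + 1) = (1 - θ k) • x k + θ k • z k + (n / τ * θ k) • (z (k + 1) - z k) :=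
    fun k => by rw [hx, hy]
  have hsum := hγ.eq_sum_smul hc (x := fun _ => (1 : ℝ)) (z := fun _ => 1) rfl
    (fun k => by simp only [smul_eq_mul]; ring)
  intro k
  refine ⟨hγ.nonneg hθpos hθid hc k, ?_, hγ.eq_sum_smul hc hx0 hx' k⟩
  simpa using (hsum k).symm

theorem x_convex_combination_of_z (n τ : ℝ) (hn : 0 < n) (hτ : 0 < τ) (hτn : τ ≤ n)
    (N : ℕ) (θ : ℕ → ℝ) (hθpos : ∀ k, 0 < θ k) (hθle1 : ∀ k, θ k ≤ 1)
    (hθ0 : θ 0 = τ / n)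
    (hθid : ∀ k, (1 - θ (k + 1)) / (θ (k + 1)) ^ 2 = 1 / (θ k) ^ 2)
    (x y z : ℕ → (Fin N → ℝ))
    (hx0 : x 0 = z 0)
    (hy : ∀ k, y k = (1 - θ k) • x k + θ k • z k)
    (hx : ∀ k, x (k + 1) = y k + ((n / τ) * θ k) • (z (k + 1) - z k))
    (γ : ℕ → ℕ → ℝ)
    (hγ00 : γ 0 0 = 1) (hγ10 : γ 1 0 = 0) (hγ11 : γ 1 1 = 1)
    (hγrec : ∀ j : ℕ, ∀ l ≤ j,
      γ (j + 2) l = (1 - θ (j + 1)) * γ (j + 1) l)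
    (hγk : ∀ j : ℕ,
      γ (j + 2) (j + 1) = θ (j + 1) * (1 - (n / τ) * θ j) + (n / τ) * (θ j - θ (j + 1)))
    (hγtop : ∀ j : ℕ, γ (j + 2) (j + 2) = (n / τ) * θ (j + 1)) :
    ∀ k : ℕ, (∀ l ≤ k, 0 ≤ γ k l) ∧ (∑ l ∈ Finset.range (k + 1), γ k l = 1) ∧
      x k = ∑ l ∈ Finset.range (k + 1), γ k l • z l :=
  x_convex_combination_of_z_general n τ N θ hθpos hθ0 hθid x y z hx0 hy hx γ hγ00 hγ10 hγ11 hγrec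
    hγk hγtop
end

section
/- Under the recursion of the previous lemma, the coefficients satisfy the identity γ_{k+1}^k + ((n−τ)/τ) θ_k = (1 − θ_k) γ_k^k for all k ≥ 0. -/
theorem gamma_identity_general (n τ : ℝ) (hn : 0 < n) (hτ : 0 < τ)
    (θ : ℕ → ℝ) (hθ0 : θ 0 = τ / n)
    (γ : ℕ → ℕ → ℝ)
    (hγ00 : γ 0 0 = 1) (hγ10 : γ 1 0 = 0) (hγ11 : γ 1 1 = 1)
    (hγk : ∀ j : ℕ,
      γ (j + 2) (j + 1) = θ (j + 1) * (1 - (n / τ) * θ j) + (n / τ) * (θ j - θ (j + 1)))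
    (hγtop : ∀ j : ℕ, γ (j + 2) (j + 2) = (n / τ) * θ (j + 1)) :
    ∀ k : ℕ, γ (k + 1) k + ((n - τ) / τ) * θ k = (1 - θ k) * γ k k := by
  have hcoeff : (n - τ) / τ = n / τ - 1 := (div_sub_one hτ.ne').symm
  have hθ0_mul : n / τ * θ 0 = 1 := by
    rw [hθ0]
    field_simp
  have hdiag : ∀ j, γ (j + 1) (j + 1) = n / τ * θ j := by
    rintro (_ | i)
    · rw [hγ11, hθ0_mul]
    · exact hγtop i
  rintro (_ | j)
  · rw [hγ10, hγ00, hcoeff]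
    linear_combination hθ0_mul
  · rw [hγk j, hdiag j, hcoeff]
    ring

theorem gamma_identity (n τ : ℝ) (hn : 0 < n) (hτ : 0 < τ) (hτn : τ ≤ n)
    (θ : ℕ → ℝ) (hθ0 : θ 0 = τ / n)
    (hrec : ∀ k, θ (k + 1) = (Real.sqrt ((θ k) ^ 4 + 4 * (θ k) ^ 2) - (θ k) ^ 2) / 2)
    (γ : ℕ → ℕ → ℝ)
    (hγ00 : γ 0 0 = 1) (hγ10 : γ 1 0 = 0) (hγ11 : γ 1 1 = 1)
    (hγrec : ∀ j : ℕ, ∀ l ≤ j,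
      γ (j + 2) l = (1 - θ (j + 1)) * γ (j + 1) l)
    (hγk : ∀ j : ℕ,
      γ (j + 2) (j + 1) = θ (j + 1) * (1 - (n / τ) * θ j) + (n / τ) * (θ j - θ (j + 1)))
    (hγtop : ∀ j : ℕ, γ (j + 2) (j + 2) = (n / τ) * θ (j + 1)) :
    ∀ k : ℕ, γ (k + 1) k + ((n - τ) / τ) * θ k = (1 - θ k) * γ k k :=
  gamma_identity_general n τ hn hτ θ hθ0 γ hγ00 hγ10 hγ11 hγk hγtop
end

section
/- Let ψ : ℝ^N → ℝ ∪ {+∞} be block separable, ψ(x) = Σ_{i=1}^n ψ_i(x^{(i)}), and let Ŝ be a uniform sampling with E|Ŝ| = τ. Then for any a, h ∈ ℝ^N, E[ψ(a + h_{[Ŝ]})] = (1 − τ/n) ψ(a) + (τ/n) ψ(a + h) provided each block belongs to Ŝ with probability τ/n. -/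
/-!
Exchange the expectation with the sum over blocks. The `i`-th term depends on `Ŝ` only through
whether `i ∈ Ŝ`, so its expectation is `P(i ∉ Ŝ) ψᵢ(aᵢ) + P(i ∈ Ŝ) ψᵢ(aᵢ + hᵢ)`, and the two
probabilities are `1 - τ/n` and `τ/n`. In `EReal` multiplication does not distribute over
addition in general; it does here because no `ψᵢ` takes the value `⊥` and the weights `p S`
are nonnegative.
-/

open Finset

namespace EReal

lemma coe_mul_top_add_of_ne_bot (c : ℝ) {y : EReal} (hy : y ≠ ⊥) :
    (c : EReal) * (⊤ + y) = c * ⊤ + c * y := by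
  rw [top_add_of_ne_bot hy]
  rcases lt_trichotomy c 0 with hc | rfl | hc
  · rw [mul_top_of_neg (by exact_mod_cast hc), bot_add]
  · simp
  · have hc' : (0 : EReal) < c := by exact_mod_cast hc
    rw [mul_top_of_pos hc', top_add_of_ne_bot]
    exact (mul_ne_bot _ _).2 ⟨.inl (coe_ne_bot c), .inr hy, .inl (coe_ne_top c), .inl hc'.le⟩

lemma coe_mul_add_of_ne_bot (c : ℝ) {x y : EReal} (hx : x ≠ ⊥) (hy : y ≠ ⊥) :
    (c : EReal) * (x + y) = c * x + c * y := by
  induction x with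
  | bot => exact absurd rfl hx
  | top => exact coe_mul_top_add_of_ne_bot c hy
  | coe r =>
    induction y with
    | bot => exact absurd rfl hy
    | top => rw [add_comm, coe_mul_top_add_of_ne_bot c hx, add_comm]
    | coe s => norm_cast; ring

lemma sum_ne_bot {ι : Type*} {s : Finset ι} {f : ι → EReal} (hf : ∀ i ∈ s, f i ≠ ⊥) :
    ∑ i ∈ s, f i ≠ ⊥ :=
  Finset.sum_induction f (· ≠ ⊥) (fun _ _ ha hb => add_ne_bot_iff.2 ⟨ha, hb⟩) (by simp) hf

lemma coe_mul_sum_of_ne_bot {ι : Type*} (c : ℝ) (s : Finset ι) {f : ι → EReal}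
    (hf : ∀ i ∈ s, f i ≠ ⊥) : (c : EReal) * ∑ i ∈ s, f i = ∑ i ∈ s, (c : EReal) * f i := by
  classical
  induction s using Finset.induction with
  | empty => simp
  | insert a s ha ih =>
    have hf' : ∀ i ∈ s, f i ≠ ⊥ := fun i hi => hf i (mem_insert_of_mem hi)
    rw [sum_insert ha, sum_insert ha, coe_mul_add_of_ne_bot c (hf a (mem_insert_self a s))
      (sum_ne_bot hf'), ih hf']

lemma coe_sum_mul_of_nonneg {ι : Type*} (s : Finset ι) {p : ι → ℝ} (hp : ∀ i ∈ s, 0 ≤ p i)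
    (x : EReal) : ((∑ i ∈ s, p i : ℝ) : EReal) * x = ∑ i ∈ s, (p i : EReal) * x := by
  classical
  induction s using Finset.induction with
  | empty => simp
  | insert a s ha ih =>
    have hp' : ∀ i ∈ s, 0 ≤ p i := fun i hi => hp i (mem_insert_of_mem hi)
    rw [sum_insert ha, sum_insert ha, coe_add, right_distrib_of_nonneg
      (EReal.coe_nonneg.2 (hp a (mem_insert_self a s))) (EReal.coe_nonneg.2 (sum_nonneg hp')),
      ih hp']

lemma sum_coe_mul_ite {α : Type*} (s : Finset α) {p : α → ℝ} (hp : ∀ S ∈ s, 0 ≤ p S)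
    (P : α → Prop) [DecidablePred P] (x y : EReal) :
    ∑ S ∈ s, (p S : EReal) * (if P S then y else x)
      = ((∑ S ∈ s with ¬P S, p S : ℝ) : EReal) * x
        + ((∑ S ∈ s with P S, p S : ℝ) : EReal) * y := by
  rw [← sum_filter_add_sum_filter_not s P, add_comm,
    coe_sum_mul_of_nonneg _ (fun S hS => hp S (mem_filter.1 hS).1),
    coe_sum_mul_of_nonneg _ (fun S hS => hp S (mem_filter.1 hS).1)]
  congr 1 <;> refine sum_congr rfl fun S hS => ?_ <;> simp [(mem_filter.1 hS).2]

end EReal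

theorem separable_psi_expectation_general (n : ℕ) (τ : ℝ)
    (N : Fin n → ℕ)
    (ψi : ∀ i : Fin n, (Fin (N i) → ℝ) → EReal)
    (hψbot : ∀ i z, ψi i z ≠ ⊥)
    -- the sampling: a probability distribution over subsets of [n]
    (p : Finset (Fin n) → ℝ) (hp : ∀ S, 0 ≤ p S) (hp1 : ∑ S : Finset (Fin n), p S = 1)
    -- each block belongs to the sampling with probability τ/n
    (hunif : ∀ i : Fin n, ∑ S ∈ (univ : Finset (Finset (Fin n))).filter (fun S => i ∈ S), p S
      = τ / n)
    (a h : ∀ i, Fin (N i) → ℝ) :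
    ∑ S : Finset (Fin n), ((p S : EReal) *
        ∑ i, ψi i (fun j => if i ∈ S then a i j + h i j else a i j))
      = ((1 - τ / n : ℝ) : EReal) * (∑ i, ψi i (a i)) +
        ((τ / n : ℝ) : EReal) * (∑ i, ψi i (fun j => a i j + h i j)) := by
  have block_update : ∀ i (S : Finset (Fin n)),
      ψi i (fun j => if i ∈ S then a i j + h i j else a i j)
        = if i ∈ S then ψi i (fun j => a i j + h i j) else ψi i (a i) := by
    intro i S
    split_ifs <;> rfl
  have prob_not_mem : ∀ i, ∑ S ∈ (univ : Finset (Finset (Fin n))) with i ∉ S, p S = 1 - τ / n :=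
    fun i => by linarith [sum_filter_add_sum_filter_not univ (i ∈ ·) p, hunif i]
  calc _ = ∑ i, ∑ S : Finset (Fin n), (p S : EReal) * ψi i
          (fun j => if i ∈ S then a i j + h i j else a i j) := by
        simp_rw [EReal.coe_mul_sum_of_ne_bot _ _ fun i _ => hψbot i _]
        exact sum_comm
    _ = ∑ i, (((1 - τ / n : ℝ) : EReal) * ψi i (a i) +
          ((τ / n : ℝ) : EReal) * ψi i (fun j => a i j + h i j)) := by
        refine sum_congr rfl fun i _ => ?_
        simp only [block_update]
        rw [EReal.sum_coe_mul_ite _ (fun S _ => hp S), hunif i, prob_not_mem i]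
    _ = _ := by
        rw [sum_add_distrib, EReal.coe_mul_sum_of_ne_bot _ _ fun i _ => hψbot i _,
          EReal.coe_mul_sum_of_ne_bot _ _ fun i _ => hψbot i _]

theorem separable_psi_expectation (n : ℕ) (hn : 0 < n) (τ : ℝ) (hτ0 : 0 ≤ τ) (hτn : τ ≤ n)
    (N : Fin n → ℕ)
    (ψi : ∀ i : Fin n, (Fin (N i) → ℝ) → EReal)
    (hψbot : ∀ i z, ψi i z ≠ ⊥)
    -- the sampling: a probability distribution over subsets of [n]
    (p : Finset (Fin n) → ℝ) (hp : ∀ S, 0 ≤ p S) (hp1 : ∑ S : Finset (Fin n), p S = 1)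
    -- each block belongs to the sampling with probability τ/n
    (hunif : ∀ i : Fin n, ∑ S ∈ (univ : Finset (Finset (Fin n))).filter (fun S => i ∈ S), p S
      = τ / n)
    (a h : ∀ i, Fin (N i) → ℝ) :
    ∑ S : Finset (Fin n), ((p S : EReal) *
        ∑ i, ψi i (fun j => if i ∈ S then a i j + h i j else a i j))
      = ((1 - τ / n : ℝ) : EReal) * (∑ i, ψi i (a i)) +
        ((τ / n : ℝ) : EReal) * (∑ i, ψi i (fun j => a i j + h i j)) :=
  separable_psi_expectation_general n τ N ψi hψbot p hp hp1 hunif a h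
end

section
/- Let f_j : ℝ^N → ℝ be convex, differentiable, depending only on blocks in C_j with |C_j| = ω_j ≥ 1, with block-Lipschitz gradients: ‖∇_i f_j(x + U_i t) − ∇_i f_j(x)‖_{(i)}* ≤ L_{ji}‖t‖_{(i)}. Let Ŝ be a τ-nice sampling of [n]. Then for all x, h ∈ ℝ^N: E[f_j(x + h_{[Ŝ]})] ≤ f_j(x) + (τ/n)(⟨∇f_j(x), h⟩ + (β_j/2)‖h‖²_{L_{j:}}), where β_j = 1 + (ω_j − 1)(τ − 1)/max(1, n − 1) and ‖h‖²_{L_{j:}} = Σ_i L_{ji}‖h^{(i)}‖_{(i)}². -/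
/-!
For a single sampled set `S`, partial separability lets one drop the blocks outside `C`, and
`x + h_[S ∩ C]` is the average over `i ∈ S ∩ C` of the points `x + ω_S U_i h⁽ⁱ⁾`, where
`ω_S = |S ∩ C|`. Convexity and the block descent lemma
`f (x + U_i t) ≤ f x + ⟨∇f x, U_i t⟩ + L_i ‖t‖² / 2` then give
`f (x + h_[S]) ≤ f x + ⟨∇f x, h_[S]⟩ + (ω_S / 2) ‖h_[S]‖²_L`. Averaging over the `τ`-nice
sampling only needs `P(i ∈ Ŝ) = τ / n` and `P(i, j ∈ Ŝ) = τ (τ - 1) / (n (n - 1))`, which turn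
`E[ω_Ŝ · 1_{i ∈ Ŝ}]` for `i ∈ C` into `(τ / n) β`.
-/

open Finset

theorem card_filter_powersetCard_subset_mul_descFactorial {α : Type*} [DecidableEq α]
    {s t : Finset α} (hst : s ⊆ t) (k : ℕ) :
    #{u ∈ t.powersetCard k | s ⊆ u} * (#t).descFactorial #s
      = k.descFactorial #s * #(t.powersetCard k) := by
  rcases le_or_gt #s k with hsk | hks
  · rw [card_filter_powersetCard_subset s t k hst hsk, card_powersetCard,
      Nat.descFactorial_eq_factorial_mul_choose, Nat.descFactorial_eq_factorial_mul_choose,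
      mul_assoc (#s).factorial, mul_comm (k.choose #s), Nat.choose_mul hsk]
    ring
  · have hempty : {u ∈ t.powersetCard k | s ⊆ u} = ∅ :=
      filter_eq_empty_iff.2 fun u hu hsu =>
        (card_le_card hsu).not_gt ((mem_powersetCard.1 hu).2 ▸ hks)
    rw [hempty, Nat.descFactorial_eq_zero_iff_lt.2 hks]
    simp

theorem sum_filter_mem_card_inter {ι : Type*} [DecidableEq ι] (P : Finset (Finset ι))
    (C : Finset ι) (i : ι) :
    ∑ S ∈ P with i ∈ S, #(S ∩ C) = ∑ j ∈ C, #{S ∈ P | i ∈ S ∧ j ∈ S} := by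
  calc ∑ S ∈ P with i ∈ S, #(S ∩ C)
      = ∑ S ∈ P with i ∈ S, ∑ j ∈ C, if j ∈ S then 1 else 0 :=
        sum_congr rfl fun S _ => by rw [inter_comm, ← filter_mem_eq_inter, card_filter]
    _ = ∑ j ∈ C, ∑ S ∈ P with i ∈ S, if j ∈ S then 1 else 0 := sum_comm
    _ = ∑ j ∈ C, #{S ∈ P | i ∈ S ∧ j ∈ S} := by simp only [← card_filter, filter_filter]

section Sampling

variable {ι : Type*} [Fintype ι] [DecidableEq ι] (τ : ℕ)

theorem card_filter_mem_powersetCard_univ (i : ι) :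
    (#{S ∈ powersetCard τ univ | i ∈ S} : ℝ)
      = τ / Fintype.card ι * #(powersetCard τ (univ : Finset ι)) := by
  have hcount := card_filter_powersetCard_subset_mul_descFactorial (subset_univ {i}) τ
  simp only [singleton_subset_iff, card_singleton, Nat.descFactorial_one, card_univ] at hcount
  have hι : (Fintype.card ι : ℝ) ≠ 0 := Nat.cast_ne_zero.2 (Fintype.card_pos_iff.2 ⟨i⟩).ne'
  rw [div_mul_eq_mul_div, eq_div_iff hι]
  exact_mod_cast hcount

theorem card_filter_pair_mem_powersetCard_univ {i j : ι} (hij : i ≠ j) :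
    (#{S ∈ powersetCard τ univ | i ∈ S ∧ j ∈ S} : ℝ)
      = τ / Fintype.card ι * ((τ - 1) / (Fintype.card ι - 1))
        * #(powersetCard τ (univ : Finset ι)) := by
  have hcount := card_filter_powersetCard_subset_mul_descFactorial (subset_univ {i, j}) τ
  simp only [card_pair hij, card_univ, insert_subset_iff, singleton_subset_iff] at hcount
  have h2 : (2 : ℝ) ≤ Fintype.card ι := by
    exact_mod_cast (card_pair hij).symm.trans_le (card_le_univ _)
  have hι : (Fintype.card ι : ℝ) * (Fintype.card ι - 1) ≠ 0 := by nlinarith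
  rw [div_mul_div_comm, div_mul_eq_mul_div, eq_div_iff hι, ← Nat.cast_descFactorial_two,
    ← Nat.cast_descFactorial_two]
  exact_mod_cast hcount

theorem sum_powersetCard_univ_sum_mem (g : ι → ℝ) :
    ∑ S ∈ powersetCard τ univ, ∑ i ∈ S, g i
      = τ / Fintype.card ι * #(powersetCard τ (univ : Finset ι)) * ∑ i, g i := by
  rw [sum_comm' (t' := univ) (s' := fun i => {S ∈ powersetCard τ univ | i ∈ S})
    (fun S i => by simp), mul_sum]
  simp only [sum_const, nsmul_eq_mul, card_filter_mem_powersetCard_univ]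

theorem sum_powersetCard_univ_card_inter_mul_sum (C : Finset ι) (g : ι → ℝ)
    (hg : ∀ i ∉ C, g i = 0) :
    ∑ S ∈ powersetCard τ univ, #(S ∩ C) * ∑ i ∈ S, g i
      = τ / Fintype.card ι * (1 + (#C - 1) * (τ - 1) / (Fintype.card ι - 1))
        * #(powersetCard τ (univ : Finset ι)) * ∑ i, g i := by
  simp only [mul_sum]
  rw [sum_comm' (t' := univ) (s' := fun i => {S ∈ powersetCard τ univ | i ∈ S})
    (fun S i => by simp)]
  refine sum_congr rfl fun i _ => ?_
  by_cases hi : i ∈ C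
  · rw [← sum_mul, ← Nat.cast_sum, sum_filter_mem_card_inter, ← add_sum_erase _ _ hi,
      Nat.cast_add, Nat.cast_sum,
      sum_congr rfl fun j hj => card_filter_pair_mem_powersetCard_univ τ (ne_of_mem_erase hj).symm]
    simp only [and_self, card_filter_mem_powersetCard_univ, sum_const, card_erase_of_mem hi,
      nsmul_eq_mul, Nat.cast_sub (card_pos.2 ⟨i, hi⟩)]
    ring
  · simp [hg i hi]

end Sampling

theorem apply_add_le_of_fderiv_sub_le {E : Type*} [NormedAddCommGroup E] [NormedSpace ℝ E]
    {f : E → ℝ} (hf : Differentiable ℝ f) {x v : E} {K : ℝ}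
    (hK : ∀ s ∈ Set.Icc (0 : ℝ) 1, fderiv ℝ f (x + s • v) v - fderiv ℝ f x v ≤ K * s) :
    f (x + v) ≤ f x + fderiv ℝ f x v + K / 2 := by
  set ψ : ℝ → ℝ := fun s => f (x + s • v) - s * fderiv ℝ f x v - K / 2 * s ^ 2
  have hψ : ∀ s, HasDerivAt ψ (fderiv ℝ f (x + s • v) v - fderiv ℝ f x v - K * s) s := by
    intro s
    have hline : HasDerivAt (fun s : ℝ => x + s • v) v s := by
      simpa using ((hasDerivAt_id s).smul_const v).const_add x
    exact ((((hf _).hasFDerivAt.comp_hasDerivAt s hline).sub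
      ((hasDerivAt_id s).mul_const (fderiv ℝ f x v))).sub
      ((hasDerivAt_pow 2 s).const_mul (K / 2))).congr_deriv (by simp; ring)
  have hanti : AntitoneOn ψ (Set.Icc 0 1) :=
    antitoneOn_of_hasDerivWithinAt_nonpos (convex_Icc 0 1)
      (HasDerivAt.continuousOn fun s _ => hψ s) (fun s _ => (hψ s).hasDerivWithinAt)
      fun s hs => sub_nonpos.2 (hK s (interior_subset hs))
  have := hanti (Set.left_mem_Icc.2 zero_le_one) (Set.right_mem_Icc.2 zero_le_one) zero_le_one
  norm_num [ψ] at this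
  linarith

theorem ConvexOn.map_add_sum_le_card_inv_mul_sum {E ι : Type*} [AddCommGroup E] [Module ℝ E]
    {f : E → ℝ} (hf : ConvexOn ℝ Set.univ f) {s : Finset ι} (hs : s.Nonempty) (x : E)
    (v : ι → E) :
    f (x + ∑ i ∈ s, v i) ≤ (#s : ℝ)⁻¹ * ∑ i ∈ s, f (x + (#s : ℝ) • v i) := by
  have hk : (#s : ℝ) ≠ 0 := Nat.cast_ne_zero.2 hs.card_pos.ne'
  have hmean : x + ∑ i ∈ s, v i = ∑ i ∈ s, (#s : ℝ)⁻¹ • (x + (#s : ℝ) • v i) := by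
    simp only [smul_add, smul_smul, inv_mul_cancel₀ hk, one_smul, sum_add_distrib, sum_const,
      ← Nat.cast_smul_eq_nsmul ℝ, mul_inv_cancel₀ hk]
  rw [hmean, mul_sum]
  exact hf.map_sum_le (fun _ _ => inv_nonneg.2 (Nat.cast_nonneg _))
    (by rw [sum_const, nsmul_eq_mul, mul_inv_cancel₀ hk]) fun _ _ => Set.mem_univ _

section Blocks

variable {ι : Type*} [DecidableEq ι] {E : ι → Type*}
  [∀ i, NormedAddCommGroup (E i)] [∀ i, NormedSpace ℝ (E i)] {f : (∀ i, E i) → ℝ}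

theorem apply_add_single_le [Fintype ι] (hf : Differentiable ℝ f) {i : ι} {L : ℝ}
    (hlip : ∀ (x : ∀ i, E i) (t s : E i),
      |fderiv ℝ f (x + Pi.single i t) (Pi.single i s) - fderiv ℝ f x (Pi.single i s)|
        ≤ L * ‖t‖ * ‖s‖)
    (x : ∀ i, E i) (t : E i) :
    f (x + Pi.single i t) ≤ f x + fderiv ℝ f x (Pi.single i t) + L / 2 * ‖t‖ ^ 2 := by
  rw [div_mul_eq_mul_div]
  refine apply_add_le_of_fderiv_sub_le hf fun s hs => ?_
  rw [← Pi.single_smul]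
  calc _ ≤ L * ‖s • t‖ * ‖t‖ := (le_abs_self _).trans (hlip x (s • t) t)
    _ = L * ‖t‖ ^ 2 * s := by rw [norm_smul, Real.norm_of_nonneg hs.1]; ring

theorem fderiv_single_eq_zero_of_dependsOn [Fintype ι] {C : Set ι} (hdep : DependsOn f C)
    {x : ∀ i, E i} (hx : DifferentiableAt ℝ f x) {i : ι} (hi : i ∉ C) (u : E i) :
    fderiv ℝ f x (Pi.single i u) = 0 := by
  have hconst : HasLineDerivAt ℝ f 0 x (Pi.single i u) := by
    have hline : (fun s : ℝ => f (x + s • Pi.single i u)) = fun _ => f x :=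
      funext fun s => hdep fun j hj => by
        simp [Pi.single_eq_of_ne (ne_of_mem_of_not_mem hj hi)]
    change HasDerivAt _ 0 0
    rw [hline]
    exact hasDerivAt_const 0 (f x)
  exact (hx.hasFDerivAt.hasLineDerivAt _).unique hconst

theorem apply_add_sum_single_le (hf : ConvexOn ℝ Set.univ f) {L : ι → ℝ}
    (hblock : ∀ (x : ∀ i, E i) (i : ι) (t : E i),
      f (x + Pi.single i t) ≤ f x + fderiv ℝ f x (Pi.single i t) + L i / 2 * ‖t‖ ^ 2)
    (x h : ∀ i, E i) (T : Finset ι) :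
    f (x + ∑ i ∈ T, Pi.single i (h i))
      ≤ f x + ∑ i ∈ T, fderiv ℝ f x (Pi.single i (h i))
        + #T / 2 * ∑ i ∈ T, L i * ‖h i‖ ^ 2 := by
  rcases T.eq_empty_or_nonempty with rfl | hT
  · simp
  have hk : (#T : ℝ) ≠ 0 := Nat.cast_ne_zero.2 hT.card_pos.ne'
  calc f (x + ∑ i ∈ T, Pi.single i (h i))
      ≤ (#T : ℝ)⁻¹ * ∑ i ∈ T, f (x + Pi.single i ((#T : ℝ) • h i)) := by
        simpa only [Pi.single_smul] using hf.map_add_sum_le_card_inv_mul_sum hT x _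
    _ ≤ (#T : ℝ)⁻¹ * ∑ i ∈ T, (f x + #T * fderiv ℝ f x (Pi.single i (h i))
          + #T ^ 2 / 2 * (L i * ‖h i‖ ^ 2)) := by
        gcongr with i
        refine (hblock x i _).trans_eq ?_
        rw [Pi.single_smul, map_smul, norm_smul, Real.norm_natCast, smul_eq_mul]
        ring
    _ = _ := by
        simp only [sum_add_distrib, sum_const, nsmul_eq_mul, ← mul_sum]
        field_simp

theorem apply_add_sum_single_le_of_dependsOn [Fintype ι] (hf : ConvexOn ℝ Set.univ f)
    {C : Finset ι} (hdep : DependsOn f C) {L : ι → ℝ} (hL : ∀ i ∉ C, L i = 0)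
    (hblock : ∀ (x : ∀ i, E i) (i : ι) (t : E i),
      f (x + Pi.single i t) ≤ f x + fderiv ℝ f x (Pi.single i t) + L i / 2 * ‖t‖ ^ 2)
    {x : ∀ i, E i} (hx : DifferentiableAt ℝ f x) (h : ∀ i, E i) (S : Finset ι) :
    f (x + ∑ i ∈ S, Pi.single i (h i))
      ≤ f x + ∑ i ∈ S, fderiv ℝ f x (Pi.single i (h i))
        + #(S ∩ C) / 2 * ∑ i ∈ S, L i * ‖h i‖ ^ 2 := by
  have hsub : ∀ g : ι → ℝ, (∀ i ∉ C, g i = 0) → ∑ i ∈ S ∩ C, g i = ∑ i ∈ S, g i :=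
    fun g hg => sum_subset inter_subset_left fun i hiS hiSC =>
      hg i fun hiC => hiSC (mem_inter.2 ⟨hiS, hiC⟩)
  have hrestrict : f (x + ∑ i ∈ S, Pi.single i (h i)) = f (x + ∑ i ∈ S ∩ C, Pi.single i (h i)) :=
    hdep fun j hj => by simp [sum_pi_single, Finset.mem_coe.1 hj]
  rw [hrestrict, ← hsub _ fun i hi => fderiv_single_eq_zero_of_dependsOn hdep hx hi _,
    ← hsub _ fun i hi => by rw [hL i hi, zero_mul]]
  exact apply_add_sum_single_le hf hblock x h _

end Blocks

theorem eso_for_partially_separable_function_general (n τ : ℕ) (hτ1 : 1 ≤ τ) (hτn : τ ≤ n)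
    (N : Fin n → ℕ)
    (f : (∀ i : Fin n, EuclideanSpace ℝ (Fin (N i))) → ℝ)
    (hconv : ConvexOn ℝ Set.univ f) (hdiff : Differentiable ℝ f)
    (C : Finset (Fin n))
    -- f depends only on blocks in C
    (hdep : ∀ x y : ∀ i, EuclideanSpace ℝ (Fin (N i)), (∀ i ∈ C, x i = y i) → f x = f y)
    (L : Fin n → ℝ) (hL0 : ∀ i ∉ C, L i = 0)
    -- block-Lipschitz gradient: ‖∇_i f(x + U_i t) − ∇_i f(x)‖_(i)* ≤ L_i ‖t‖_(i)
    (hlip : ∀ (x : ∀ i, EuclideanSpace ℝ (Fin (N i))) (i : Fin n)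
        (t s : EuclideanSpace ℝ (Fin (N i))),
      |fderiv ℝ f (x + Pi.single i t) (Pi.single i s) - fderiv ℝ f x (Pi.single i s)|
        ≤ L i * ‖t‖ * ‖s‖) :
    ∀ (x h : ∀ i, EuclideanSpace ℝ (Fin (N i))),
      (∑ S ∈ Finset.powersetCard τ (univ : Finset (Fin n)),
          f (x + ∑ i ∈ S, Pi.single i (h i))) /
        ((Finset.powersetCard τ (univ : Finset (Fin n))).card : ℝ)
      ≤ f x + ((τ : ℝ) / n) * (fderiv ℝ f x h +
          ((1 + ((C.card : ℝ) - 1) * ((τ : ℝ) - 1) / max 1 ((n : ℝ) - 1)) / 2) *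
            ∑ i, L i * ‖h i‖ ^ 2) := by
  intro x h
  have hblock := fun x i => apply_add_single_le hdiff (fun x => hlip x i) x
  have hmax : ((#C : ℝ) - 1) * ((τ : ℝ) - 1) / max 1 ((n : ℝ) - 1)
      = ((#C : ℝ) - 1) * ((τ : ℝ) - 1) / ((n : ℝ) - 1) := by
    rcases eq_or_lt_of_le (hτ1.trans hτn) with rfl | hn
    · obtain rfl : τ = 1 := le_antisymm hτn hτ1
      simp
    · have hn2 : (2 : ℝ) ≤ n := by exact_mod_cast hn
      rw [max_eq_right (by linarith)]
  have hP : (0 : ℝ) < #(powersetCard τ (univ : Finset (Fin n))) := by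
    simpa using Nat.choose_pos hτn
  have hgrad : fderiv ℝ f x h = ∑ i, fderiv ℝ f x (Pi.single i (h i)) := by
    rw [← map_sum, univ_sum_single]
  rw [div_le_iff₀ hP]
  calc _ ≤ ∑ S ∈ powersetCard τ univ, (f x + ∑ i ∈ S, fderiv ℝ f x (Pi.single i (h i))
          + #(S ∩ C) / 2 * ∑ i ∈ S, L i * ‖h i‖ ^ 2) :=
        sum_le_sum fun S _ => apply_add_sum_single_le_of_dependsOn hconv
          (fun x y hxy => hdep x y hxy) hL0 hblock (hdiff x) h S
    _ = #(powersetCard τ univ) * f x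
          + τ / n * #(powersetCard τ univ) * ∑ i, fderiv ℝ f x (Pi.single i (h i))
          + 1 / 2 * (τ / n * (1 + (#C - 1) * (τ - 1) / (n - 1)) * #(powersetCard τ univ)
            * ∑ i, L i * ‖h i‖ ^ 2) := by
      have hquad := sum_powersetCard_univ_card_inter_mul_sum τ C (fun i => L i * ‖h i‖ ^ 2)
        fun i hi => by rw [hL0 i hi, zero_mul]
      rw [Fintype.card_fin] at hquad
      rw [sum_add_distrib, sum_add_distrib, sum_const, nsmul_eq_mul,
        sum_powersetCard_univ_sum_mem, Fintype.card_fin, ← hquad, mul_sum (powersetCard τ univ)]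
      exact congrArg _ (sum_congr rfl fun S _ => by ring)
    _ = _ := by rw [hgrad, hmax]; ring

theorem eso_for_partially_separable_function (n τ : ℕ) (hτ1 : 1 ≤ τ) (hτn : τ ≤ n)
    (N : Fin n → ℕ)
    (f : (∀ i : Fin n, EuclideanSpace ℝ (Fin (N i))) → ℝ)
    (hconv : ConvexOn ℝ Set.univ f) (hdiff : Differentiable ℝ f)
    (C : Finset (Fin n)) (hω : 1 ≤ C.card)
    -- f depends only on blocks in C
    (hdep : ∀ x y : ∀ i, EuclideanSpace ℝ (Fin (N i)), (∀ i ∈ C, x i = y i) → f x = f y)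
    (L : Fin n → ℝ) (hL : ∀ i, 0 ≤ L i) (hL0 : ∀ i ∉ C, L i = 0)
    -- block-Lipschitz gradient: ‖∇_i f(x + U_i t) − ∇_i f(x)‖_(i)* ≤ L_i ‖t‖_(i)
    (hlip : ∀ (x : ∀ i, EuclideanSpace ℝ (Fin (N i))) (i : Fin n)
        (t s : EuclideanSpace ℝ (Fin (N i))),
      |fderiv ℝ f (x + Pi.single i t) (Pi.single i s) - fderiv ℝ f x (Pi.single i s)|
        ≤ L i * ‖t‖ * ‖s‖) :
    ∀ (x h : ∀ i, EuclideanSpace ℝ (Fin (N i))),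
      (∑ S ∈ Finset.powersetCard τ (univ : Finset (Fin n)),
          f (x + ∑ i ∈ S, Pi.single i (h i))) /
        ((Finset.powersetCard τ (univ : Finset (Fin n))).card : ℝ)
      ≤ f x + ((τ : ℝ) / n) * (fderiv ℝ f x h +
          ((1 + ((C.card : ℝ) - 1) * ((τ : ℝ) - 1) / max 1 ((n : ℝ) - 1)) / 2) *
            ∑ i, L i * ‖h i‖ ^ 2) :=
  eso_for_partially_separable_function_general n τ hτ1 hτn N f hconv hdiff C hdep L hL0 hlip
end

section
/- Let f = Σ_{j=1}^m f_j with each f_j convex, differentiable, depending on blocks in C_j (|C_j| = ω_j), and having block-Lipschitz gradient constants L_{ji}. Then for all x, h ∈ ℝ^N: f(x + h) ≤ f(x) + ⟨∇f(x), h⟩ + (ω̄ L̄/2)‖h‖_w², where ω̄ = Σ_j ω_j (Σ_i L_{ji})/(Σ_{k,i} L_{ki}), L̄ = (Σ_{j,i} L_{ji})/n, and w_i = n (Σ_j ω_j L_{ji})/(Σ_{j,i} ω_j L_{ji}). -/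
/-!
On the blocks `C j` that `f j` depends on, `x + h` is the average of the `ω_j = #(C j)` points
`x + ω_j U_i h_i`, `i ∈ C j`. Convexity bounds `f j (x + h)` by the average of the values at these
points, and the one-dimensional descent lemma along block `i` bounds each of them by
`f j x + ω_j ⟨∇_i f j x, h_i⟩ + L_{ji} ω_j² ‖h_i‖² / 2`. Hence
`f j (x + h) ≤ f j x + ⟨∇ f j x, h⟩ + (ω_j / 2) Σ_i L_{ji} ‖h_i‖²`, and summing over `j` gives the
claim because the constants satisfy `ω̄ L̄ w_i = Σ_j ω_j L_{ji}`.
-/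

open Finset

section Descent

variable {E : Type*} [NormedAddCommGroup E] [NormedSpace ℝ E] {F : E → ℝ}

theorem hasDerivAt_apply_add_smul (hF : Differentiable ℝ F) (x v : E) (τ : ℝ) :
    HasDerivAt (fun σ : ℝ => F (x + σ • v)) (fderiv ℝ F (x + τ • v) v) τ := by
  have hline : HasDerivAt (fun σ : ℝ => x + σ • v) v τ := by
    simpa using ((hasDerivAt_id τ).smul_const v).const_add x
  exact (hF _).hasFDerivAt.comp_hasDerivAt τ hline

theorem le_add_fderiv_add_half_of_fderiv_sub_le (hF : Differentiable ℝ F) (x v : E) (K : ℝ)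
    (hK : ∀ τ ∈ Set.Ioo (0 : ℝ) 1, fderiv ℝ F (x + τ • v) v - fderiv ℝ F x v ≤ K * τ) :
    F (x + v) ≤ F x + fderiv ℝ F x v + K / 2 := by
  set D := fderiv ℝ F x v
  let ψ : ℝ → ℝ := fun τ => F (x + τ • v) - τ * D - K * τ ^ 2 / 2
  have hψ : ∀ τ, HasDerivAt ψ (fderiv ℝ F (x + τ • v) v - D - K * τ) τ := fun τ => by
    have hquad := ((hasDerivAt_pow 2 τ).const_mul K).div_const 2
    refine (((hasDerivAt_apply_add_smul hF x v τ).sub ((hasDerivAt_id τ).mul_const D)).sub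
      hquad).congr_deriv ?_
    ring
  have hanti : AntitoneOn ψ (Set.Icc 0 1) := by
    refine antitoneOn_of_deriv_nonpos (convex_Icc 0 1)
      (fun τ _ => (hψ τ).continuousAt.continuousWithinAt)
      (fun τ _ => (hψ τ).differentiableAt.differentiableWithinAt) fun τ hτ => ?_
    rw [interior_Icc] at hτ
    rw [(hψ τ).deriv]
    linarith [hK τ hτ]
  have := hanti (by simp) (by simp) zero_le_one
  simp only [ψ] at this
  norm_num at this
  linarith

end Descent

section Convex

variable {ι : Type*} [DecidableEq ι] {E : ι → Type*}
  [∀ i, AddCommGroup (E i)] [∀ i, Module ℝ (E i)] {F : (∀ i, E i) → ℝ}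

theorem ConvexOn.apply_add_le_add_inv_card_mul_sum {C : Finset ι}
    (hconv : ConvexOn ℝ Set.univ F)
    (hdep : ∀ x y : ∀ i, E i, (∀ i ∈ C, x i = y i) → F x = F y) (x h : ∀ i, E i) :
    F (x + h) ≤ F x + (#C : ℝ)⁻¹ * ∑ i ∈ C, (F (x + Pi.single i ((#C : ℝ) • h i)) - F x) := by
  rcases C.eq_empty_or_nonempty with rfl | hC
  · simp [hdep (x + h) x (by simp)]
  set ω : ℝ := ((#C : ℕ) : ℝ)
  have hω : ω ≠ 0 := by positivity
  have hweights : ∑ _i ∈ C, ω⁻¹ = 1 := by simp [ω, hω]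
  have hsum_single : ∀ k ∈ C, (∑ i ∈ C, (Pi.single i (h i) : ∀ i, E i)) k = h k := fun k hk => by
    rw [Finset.sum_apply, sum_eq_single_of_mem k hk fun i _ hik => by simp [hik.symm],
      Pi.single_eq_same]
  have havg : F (x + h) = F (∑ i ∈ C, ω⁻¹ • (x + Pi.single i (ω • h i))) := by
    refine hdep _ _ fun k hk => ?_
    simp_rw [smul_add, ← Pi.single_smul, smul_smul, inv_mul_cancel₀ hω, one_smul,
      sum_add_distrib, ← sum_smul, hweights, one_smul]
    simp [hsum_single k hk]
  calc F (x + h) ≤ ∑ i ∈ C, ω⁻¹ • F (x + Pi.single i (ω • h i)) :=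
        havg ▸ hconv.map_sum_le (fun _ _ => by positivity) hweights fun _ _ => Set.mem_univ _
    _ = _ := by
      simp only [smul_eq_mul, ← mul_sum, sum_sub_distrib, sum_const, nsmul_eq_mul]
      field_simp
      ring

end Convex

section Blocks

variable {ι : Type*} [Fintype ι] [DecidableEq ι] {E : ι → Type*}
  [∀ i, NormedAddCommGroup (E i)] [∀ i, NormedSpace ℝ (E i)] {F : (∀ i, E i) → ℝ}

theorem le_add_fderiv_single_add_of_blockLipschitz (hF : Differentiable ℝ F) (x : ∀ i, E i)
    {i : ι} {K : ℝ}
    (hlip : ∀ u s : E i,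
      |fderiv ℝ F (x + Pi.single i u) (Pi.single i s) - fderiv ℝ F x (Pi.single i s)|
        ≤ K * ‖u‖ * ‖s‖)
    (t : E i) :
    F (x + Pi.single i t) ≤ F x + fderiv ℝ F x (Pi.single i t) + K / 2 * ‖t‖ ^ 2 := by
  have := le_add_fderiv_add_half_of_fderiv_sub_le hF x (Pi.single i t) (K * ‖t‖ ^ 2)
    fun τ hτ => by
      have hbound := (le_abs_self _).trans (hlip (τ • t) t)
      rw [norm_smul, Real.norm_of_nonneg hτ.1.le] at hbound
      rw [← Pi.single_smul]
      linarith
  linarith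

theorem fderiv_single_eq_zero_of_not_mem {C : Finset ι} (hF : Differentiable ℝ F)
    (hdep : ∀ x y : ∀ i, E i, (∀ i ∈ C, x i = y i) → F x = F y)
    (x : ∀ i, E i) {i : ι} (hi : i ∉ C) (s : E i) :
    fderiv ℝ F x (Pi.single i s) = 0 := by
  have hconst : (fun τ : ℝ => F (x + τ • Pi.single i s)) = fun _ => F x :=
    funext fun τ => hdep _ _ fun k hk => by
      simp [Pi.single_eq_of_ne (ne_of_mem_of_not_mem hk hi)]
  have := hasDerivAt_apply_add_smul hF x (Pi.single i s) 0
  rw [hconst, zero_smul, add_zero] at this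
  exact (hasDerivAt_const 0 (F x)).unique this |>.symm

theorem fderiv_apply_eq_sum_single {C : Finset ι} (hF : Differentiable ℝ F)
    (hdep : ∀ x y : ∀ i, E i, (∀ i ∈ C, x i = y i) → F x = F y) (x h : ∀ i, E i) :
    fderiv ℝ F x h = ∑ i ∈ C, fderiv ℝ F x (Pi.single i (h i)) := by
  conv_lhs => rw [← univ_sum_single h, map_sum]
  exact (sum_subset (subset_univ C) fun i _ hi =>
    fderiv_single_eq_zero_of_not_mem hF hdep x hi (h i)).symm

theorem apply_add_le_of_convexOn_of_blockLipschitz {C : Finset ι}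
    (hconv : ConvexOn ℝ Set.univ F) (hF : Differentiable ℝ F)
    (hdep : ∀ x y : ∀ i, E i, (∀ i ∈ C, x i = y i) → F x = F y) (L : ι → ℝ)
    (hlip : ∀ (x : ∀ i, E i) (i : ι) (t s : E i),
      |fderiv ℝ F (x + Pi.single i t) (Pi.single i s) - fderiv ℝ F x (Pi.single i s)|
        ≤ L i * ‖t‖ * ‖s‖)
    (x h : ∀ i, E i) :
    F (x + h) ≤ F x + fderiv ℝ F x h + (#C : ℝ) / 2 * ∑ i, L i * ‖h i‖ ^ 2 := by
  set ω : ℝ := ((#C : ℕ) : ℝ)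
  have hblock : ∀ i ∈ C, ω⁻¹ * (F (x + Pi.single i (ω • h i)) - F x)
      ≤ fderiv ℝ F x (Pi.single i (h i)) + ω / 2 * (L i * ‖h i‖ ^ 2) := fun i hi => by
    have hω : 0 < ω := by simp only [ω]; exact_mod_cast card_pos.mpr ⟨i, hi⟩
    have := le_add_fderiv_single_add_of_blockLipschitz hF x (hlip x i) (ω • h i)
    rw [Pi.single_smul, map_smul, smul_eq_mul, ← Pi.single_smul, norm_smul,
      Real.norm_of_nonneg hω.le] at this
    rw [inv_mul_le_iff₀ hω]
    linarith
  have hquad_nonneg : ∀ i, 0 ≤ L i * ‖h i‖ ^ 2 := fun i => by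
    nlinarith [(abs_nonneg _).trans (hlip x i (h i) (h i))]
  calc F (x + h)
      ≤ F x + ω⁻¹ * ∑ i ∈ C, (F (x + Pi.single i (ω • h i)) - F x) :=
        hconv.apply_add_le_add_inv_card_mul_sum hdep x h
    _ ≤ F x + ∑ i ∈ C, (fderiv ℝ F x (Pi.single i (h i)) + ω / 2 * (L i * ‖h i‖ ^ 2)) := by
        rw [mul_sum]
        gcongr with i hi
        exact hblock i hi
    _ = F x + fderiv ℝ F x h + ω / 2 * ∑ i ∈ C, L i * ‖h i‖ ^ 2 := by
        rw [sum_add_distrib, ← mul_sum, fderiv_apply_eq_sum_single hF hdep x h]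
        ring
    _ ≤ F x + fderiv ℝ F x h + ω / 2 * ∑ i, L i * ‖h i‖ ^ 2 := by
        have := sum_le_univ_sum_of_nonneg (s := C) hquad_nonneg
        gcongr

end Blocks

theorem avgDegree_mul_avgLipschitz_mul_weight {κ ι : Type*} [Fintype κ] [Fintype ι]
    (ω : κ → ℝ) (L : κ → ι → ℝ) {n : ℝ} (hn : n ≠ 0) (hL : ∑ j, ∑ i, L j i ≠ 0)
    (hωL : ∑ j, ∑ i, ω j * L j i ≠ 0) (i : ι) :
    (∑ j, ω j * (∑ i, L j i) / (∑ k, ∑ i, L k i)) * ((∑ j, ∑ i, L j i) / n) *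
        (n * (∑ j, ω j * L j i) / (∑ j, ∑ i', ω j * L j i'))
      = ∑ j, ω j * L j i := by
  simp_rw [← sum_div, mul_sum]
  field_simp
  simp only [mul_sum, mul_assoc]

theorem avgDegree_mul_avgLipschitz_mul_weighted_sum {κ ι : Type*} [Fintype κ] [Fintype ι]
    (ω : κ → ℝ) (L : κ → ι → ℝ) {n : ℝ} (hn : n ≠ 0) (hL : ∑ j, ∑ i, L j i ≠ 0)
    (hωL : ∑ j, ∑ i, ω j * L j i ≠ 0) (q : ι → ℝ) :
    ((∑ j, ω j * (∑ i, L j i) / (∑ k, ∑ i, L k i)) * ((∑ j, ∑ i, L j i) / n) / 2) *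
        ∑ i, (n * (∑ j, ω j * L j i) / (∑ j, ∑ i', ω j * L j i')) * q i
      = ∑ j, ω j / 2 * ∑ i, L j i * q i := by
  calc _ = ∑ i, (∑ j, ω j * (∑ i, L j i) / (∑ k, ∑ i, L k i)) * ((∑ j, ∑ i, L j i) / n) *
          (n * (∑ j, ω j * L j i) / (∑ j, ∑ i', ω j * L j i')) / 2 * q i := by
        rw [mul_sum]
        exact sum_congr rfl fun i _ => by ring
    _ = ∑ i, (∑ j, ω j * L j i) / 2 * q i := by
        simp_rw [avgDegree_mul_avgLipschitz_mul_weight ω L hn hL hωL]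
    _ = _ := by
        simp_rw [sum_div, sum_mul, mul_sum]
        rw [sum_comm]
        exact sum_congr rfl fun j _ => sum_congr rfl fun i _ => by ring

theorem dso_with_average_degree_of_separability_general (n m : ℕ)
    (N : Fin n → ℕ)
    (f : Fin m → (∀ i : Fin n, EuclideanSpace ℝ (Fin (N i))) → ℝ)
    (hconv : ∀ j, ConvexOn ℝ Set.univ (f j)) (hdiff : ∀ j, Differentiable ℝ (f j))
    (C : Fin m → Finset (Fin n))
    (hdep : ∀ j, ∀ x y : ∀ i, EuclideanSpace ℝ (Fin (N i)),
      (∀ i ∈ C j, x i = y i) → f j x = f j y)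
    (L : Fin m → Fin n → ℝ)
    (hlip : ∀ j, ∀ (x : ∀ i, EuclideanSpace ℝ (Fin (N i))) (i : Fin n)
        (t s : EuclideanSpace ℝ (Fin (N i))),
      |fderiv ℝ (f j) (x + Pi.single i t) (Pi.single i s) - fderiv ℝ (f j) x (Pi.single i s)|
        ≤ L j i * ‖t‖ * ‖s‖)
    (hLsum : 0 < ∑ j, ∑ i, L j i)
    (hωLsum : 0 < ∑ j, ∑ i, ((C j).card : ℝ) * L j i) :
    ∀ (x h : ∀ i, EuclideanSpace ℝ (Fin (N i))),
      (∑ j, f j (x + h)) ≤ (∑ j, f j x) +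
        fderiv ℝ (fun y => ∑ j, f j y) x h +
        ((∑ j, ((C j).card : ℝ) * (∑ i, L j i) / (∑ k, ∑ i, L k i)) *
            ((∑ j, ∑ i, L j i) / n) / 2) *
          ∑ i, ((n : ℝ) * (∑ j, ((C j).card : ℝ) * L j i) /
              (∑ j, ∑ i', ((C j).card : ℝ) * L j i')) * ‖h i‖ ^ 2 := by
  intro x h
  have hn : (n : ℝ) ≠ 0 := Nat.cast_ne_zero.mpr fun hn => by subst hn; simp at hLsum
  have hfderiv : fderiv ℝ (fun y => ∑ j, f j y) x h = ∑ j, fderiv ℝ (f j) x h := by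
    rw [fderiv_fun_sum fun j _ => (hdiff j).differentiableAt, _root_.sum_apply]
  calc ∑ j, f j (x + h)
      ≤ ∑ j, (f j x + fderiv ℝ (f j) x h + ((C j).card : ℝ) / 2 * ∑ i, L j i * ‖h i‖ ^ 2) :=
        sum_le_sum fun j _ => apply_add_le_of_convexOn_of_blockLipschitz (hconv j)
          (hdiff j) (hdep j) (L j) (hlip j) x h
    _ = _ := by
      rw [sum_add_distrib, sum_add_distrib, hfderiv,
        avgDegree_mul_avgLipschitz_mul_weighted_sum _ L hn hLsum.ne' hωLsum.ne']

theorem dso_with_average_degree_of_separability (n m : ℕ)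
    (N : Fin n → ℕ)
    (f : Fin m → (∀ i : Fin n, EuclideanSpace ℝ (Fin (N i))) → ℝ)
    (hconv : ∀ j, ConvexOn ℝ Set.univ (f j)) (hdiff : ∀ j, Differentiable ℝ (f j))
    (C : Fin m → Finset (Fin n))
    (hdep : ∀ j, ∀ x y : ∀ i, EuclideanSpace ℝ (Fin (N i)),
      (∀ i ∈ C j, x i = y i) → f j x = f j y)
    (L : Fin m → Fin n → ℝ) (hL : ∀ j i, 0 ≤ L j i) (hL0 : ∀ j, ∀ i ∉ C j, L j i = 0)
    (hlip : ∀ j, ∀ (x : ∀ i, EuclideanSpace ℝ (Fin (N i))) (i : Fin n)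
        (t s : EuclideanSpace ℝ (Fin (N i))),
      |fderiv ℝ (f j) (x + Pi.single i t) (Pi.single i s) - fderiv ℝ (f j) x (Pi.single i s)|
        ≤ L j i * ‖t‖ * ‖s‖)
    (hLsum : 0 < ∑ j, ∑ i, L j i)
    (hωLsum : 0 < ∑ j, ∑ i, ((C j).card : ℝ) * L j i) :
    ∀ (x h : ∀ i, EuclideanSpace ℝ (Fin (N i))),
      (∑ j, f j (x + h)) ≤ (∑ j, f j x) +
        fderiv ℝ (fun y => ∑ j, f j y) x h +
        ((∑ j, ((C j).card : ℝ) * (∑ i, L j i) / (∑ k, ∑ i, L k i)) *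
            ((∑ j, ∑ i, L j i) / n) / 2) *
          ∑ i, ((n : ℝ) * (∑ j, ((C j).card : ℝ) * L j i) /
              (∑ j, ∑ i', ((C j).card : ℝ) * L j i')) * ‖h i‖ ^ 2 :=
  dso_with_average_degree_of_separability_general n m N f hconv hdiff C hdep L hlip hLsum hωLsum
end

section
/- Consider two coupled recursions in ℝ^N driven by the same random sets S_k and the same step vectors: (A) y_k = (1−θ_k)x_k + θ_k z_k, z_{k+1} updates blocks i ∈ S_k of z_k by a proximal step at y_k, x_{k+1} = y_k + (n/τ)θ_k(z_{k+1} − z_k); (B) u₀ = 0, z̃₀ = x₀, and for i ∈ S_k: z̃_{k+1}^{(i)} = z̃_k^{(i)} + t_k^{(i)}, u_{k+1}^{(i)} = u_k^{(i)} − ((1 − (n/τ)θ_k)/θ_k²) t_k^{(i)}, where t_k^{(i)} is the same proximal step evaluated at θ_k² u_k + z̃_k. If θ₀ = τ/n and (1−θ_{k+1})/θ_{k+1}² = 1/θ_k², then for all k: z_k = z̃_k, y_k = θ_k² u_k + z̃_k, and x_k = θ_{k−1}² u_k + z̃_k for k ≥ 1 (x₀ = z̃₀). -/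
/-!
Algorithm 2 is Algorithm 1 with the change of variables `y_k = θ_k² u_k + z_k`, and the proof is
an induction on the pair of identities `z_k = z̃_k`, `y_k = θ_k² u_k + z̃_k`. Given them at step `k`,
both algorithms evaluate the same proximal steps, so `z_{k+1} = z̃_{k+1}`; the `u`-update is chosen
so that `u_{k+1} - u_k = -((1 - (n/τ)θ_k)/θ_k²) (z̃_{k+1} - z̃_k)`, which turns the `x`-update into
`x_{k+1} = θ_k² u_{k+1} + z̃_{k+1}`; finally `(1 - θ_{k+1}) θ_k² = θ_{k+1}²` turns the convex
combination defining `y_{k+1}` into `θ_{k+1}² u_{k+1} + z̃_{k+1}`.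
-/

theorem one_sub_mul_sq_eq_sq_of_div_sq_eq {K : Type*} [Field K] {a b : K} (ha : a ≠ 0)
    (hb : b ≠ 0) (h : (1 - b) / b ^ 2 = 1 / a ^ 2) : (1 - b) * a ^ 2 = b ^ 2 := by
  field_simp at h
  linear_combination h

theorem sub_eq_neg_smul_sub_of_blockwise_update {R ι : Type*} [Ring R] [DecidableEq ι] {M : ι → Type*}
    [∀ i, AddCommGroup (M i)] [∀ i, Module R (M i)] (S : Finset ι) (c : R)
    {p w w' u u' : ∀ i, M i}
    (hw : ∀ i, w' i = if i ∈ S then w i + p i else w i)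
    (hu : ∀ i, u' i = if i ∈ S then u i - c • p i else u i) :
    u' - u = -c • (w' - w) := by
  funext i
  simp only [Pi.sub_apply, Pi.smul_apply, hw, hu]
  split_ifs <;> simp

theorem smul_add_add_smul_sub_eq_of_sub_eq {K E : Type*} [Field K] [AddCommGroup E] [Module K E]
    {a β : K} (ha : a ≠ 0) {u u' w w' : E} (hu : u' - u = -((1 - β) / a) • (w' - w)) :
    a • u + w + β • (w' - w) = a • u' + w' := by
  rw [← sub_add_cancel u' u, hu, smul_add, smul_smul, mul_neg, mul_div_cancel₀ _ ha]
  module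

theorem approx_implementations_equivalent_general (n τ : ℝ)
    (d : ℕ) (Nb : Fin d → ℕ)
    (θ : ℕ → ℝ) (hθpos : ∀ k, 0 < θ k)
    (hθid : ∀ k, (1 - θ (k + 1)) / (θ (k + 1)) ^ 2 = 1 / (θ k) ^ 2)
    -- the random sets of blocks selected at each iteration
    (S : ℕ → Finset (Fin d))
    -- `P i k y zi` is the proximal step for block `i` at iteration `k`, evaluated at the
    -- point `y` with center block `zi` (e.g. the argmin of the proximal subproblem)
    (P : (i : Fin d) → ℕ → (∀ i' : Fin d, Fin (Nb i') → ℝ) → (Fin (Nb i) → ℝ) → (Fin (Nb i) → ℝ))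
    -- Recursion (A): Algorithm 1
    (x y z : ℕ → ∀ i : Fin d, Fin (Nb i) → ℝ)
    (hx0 : x 0 = z 0)
    (hy : ∀ k, y k = (1 - θ k) • x k + θ k • z k)
    (hz : ∀ k i, z (k + 1) i = if i ∈ S k then z k i + P i k (y k) (z k i) else z k i)
    (hx : ∀ k, x (k + 1) = y k + ((n / τ) * θ k) • (z (k + 1) - z k))
    -- Recursion (B): Algorithm 2
    (u zt : ℕ → ∀ i : Fin d, Fin (Nb i) → ℝ)
    (hu0 : u 0 = 0) (hzt0 : zt 0 = x 0)
    (hzt : ∀ k i, zt (k + 1) i =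
      if i ∈ S k then zt k i + P i k ((θ k) ^ 2 • u k + zt k) (zt k i) else zt k i)
    (hu : ∀ k i, u (k + 1) i =
      if i ∈ S k then
        u k i - ((1 - (n / τ) * θ k) / (θ k) ^ 2) • P i k ((θ k) ^ 2 • u k + zt k) (zt k i)
      else u k i) :
    ∀ k : ℕ, z k = zt k ∧ y k = (θ k) ^ 2 • u k + zt k ∧
      (1 ≤ k → x k = (θ (k - 1)) ^ 2 • u k + zt k) := by
  have step : ∀ k, z k = zt k → y k = θ k ^ 2 • u k + zt k →
      z (k + 1) = zt (k + 1) ∧ x (k + 1) = θ k ^ 2 • u (k + 1) + zt (k + 1) := by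
    intro k hzk hyk
    have hz' : z (k + 1) = zt (k + 1) := funext fun i => by rw [hz, hzt, hzk, hyk]
    refine ⟨hz', ?_⟩
    rw [hx, hz', hzk, hyk]
    exact smul_add_add_smul_sub_eq_of_sub_eq (pow_ne_zero 2 (hθpos k).ne')
      (sub_eq_neg_smul_sub_of_blockwise_update (S k) _ (hzt k) (hu k))
  have invariant : ∀ k, z k = zt k ∧ y k = θ k ^ 2 • u k + zt k := by
    intro k
    induction k with
    | zero =>
      have hz0 : z 0 = zt 0 := (hzt0.trans hx0).symm
      refine ⟨hz0, ?_⟩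
      rw [hy, hx0, hu0, hz0]
      module
    | succ k ih =>
      obtain ⟨hz', hx'⟩ := step k ih.1 ih.2
      have hθ := one_sub_mul_sq_eq_sq_of_div_sq_eq (hθpos k).ne' (hθpos (k + 1)).ne' (hθid k)
      refine ⟨hz', ?_⟩
      rw [hy, hx', hz', smul_add, smul_smul, hθ]
      module
  intro k
  refine ⟨(invariant k).1, (invariant k).2, fun hk => ?_⟩
  obtain ⟨j, rfl⟩ := Nat.exists_eq_add_of_le' hk
  exact (step j (invariant j).1 (invariant j).2).2

theorem approx_implementations_equivalent (n τ : ℝ) (hn : 0 < n) (hτ : 0 < τ) (hτn : τ ≤ n)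
    (d : ℕ) (Nb : Fin d → ℕ)
    (θ : ℕ → ℝ) (hθpos : ∀ k, 0 < θ k)
    (hθ0 : θ 0 = τ / n)
    (hθid : ∀ k, (1 - θ (k + 1)) / (θ (k + 1)) ^ 2 = 1 / (θ k) ^ 2)
    -- the random sets of blocks selected at each iteration
    (S : ℕ → Finset (Fin d))
    -- `P i k y zi` is the proximal step for block `i` at iteration `k`, evaluated at the
    -- point `y` with center block `zi` (e.g. the argmin of the proximal subproblem)
    (P : (i : Fin d) → ℕ → (∀ i' : Fin d, Fin (Nb i') → ℝ) → (Fin (Nb i) → ℝ) → (Fin (Nb i) → ℝ))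
    -- Recursion (A): Algorithm 1
    (x y z : ℕ → ∀ i : Fin d, Fin (Nb i) → ℝ)
    (hx0 : x 0 = z 0)
    (hy : ∀ k, y k = (1 - θ k) • x k + θ k • z k)
    (hz : ∀ k i, z (k + 1) i = if i ∈ S k then z k i + P i k (y k) (z k i) else z k i)
    (hx : ∀ k, x (k + 1) = y k + ((n / τ) * θ k) • (z (k + 1) - z k))
    -- Recursion (B): Algorithm 2
    (u zt : ℕ → ∀ i : Fin d, Fin (Nb i) → ℝ)
    (hu0 : u 0 = 0) (hzt0 : zt 0 = x 0)
    (hzt : ∀ k i, zt (k + 1) i =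
      if i ∈ S k then zt k i + P i k ((θ k) ^ 2 • u k + zt k) (zt k i) else zt k i)
    (hu : ∀ k i, u (k + 1) i =
      if i ∈ S k then
        u k i - ((1 - (n / τ) * θ k) / (θ k) ^ 2) • P i k ((θ k) ^ 2 • u k + zt k) (zt k i)
      else u k i) :
    ∀ k : ℕ, z k = zt k ∧ y k = (θ k) ^ 2 • u k + zt k ∧
      (1 ≤ k → x k = (θ (k - 1)) ^ 2 • u k + zt k) :=
  approx_implementations_equivalent_general n τ d Nb θ hθpos hθid S P x y z hx0 hy hz hx u zt hu0
    hzt0 hzt hu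
end
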